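/- Let A be an n×n matrix over the max-plus algebra ℝ_max and let r ∈ ℝ_max^n with r ≠ (ε,…,ε). Suppose there exist integers p > q ≥ 0 and a real number c ≥ 0 such that A^{⊗p} ⊗ r = c ⊗ (A^{⊗q} ⊗ r) (i.e. (A^{⊗p} ⊗ r)_i = c + (A^{⊗q} ⊗ r)_i for all i). Set λ = c/(p−q) and v = ⊕_{i=1}^{p−q} ( λ^{⊗(p−q−i)} ⊗ A^{⊗(q+i−1)} ⊗ r ), i.e. v_s = max_{1 ≤ i ≤ p−q} ( (p−q−i)·λ + (A^{⊗(q+i−1)} ⊗ r)_s ). If v ≠ (ε,…,ε), then λ is an eigenvalue of A with eigenvector v: A ⊗ v = λ ⊗ v. -/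

import Mathlib

/-- Max-plus matrix–vector product over `ℝ_max = ℝ ∪ {−∞}` (modelled as `WithBot ℝ`):
`(A ⊗ v) i = max_j (A i j + v j)`. -/
def mpMulVec {n : ℕ} (A : Matrix (Fin n) (Fin n) (WithBot ℝ)) (v : Fin n → WithBot ℝ) :
    Fin n → WithBot ℝ :=
  fun i => Finset.univ.sup fun j => A i j + v j

/-- Max-plus matrix product: `(A ⊗ B) i j = max_k (A i k + B k j)`. -/
def mpMul {n : ℕ} (A B : Matrix (Fin n) (Fin n) (WithBot ℝ)) :
    Matrix (Fin n) (Fin n) (WithBot ℝ) :=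
  Matrix.of fun i j => Finset.univ.sup fun k => A i k + B k j

/-- The max-plus identity matrix: `e = 0` on the diagonal, `ε = −∞` elsewhere. -/
def mpId (n : ℕ) : Matrix (Fin n) (Fin n) (WithBot ℝ) :=
  Matrix.of fun i j => if i = j then ((0 : ℝ) : WithBot ℝ) else ⊥

/-- Max-plus matrix power: `A^{⊗0} = E_n`, `A^{⊗(k+1)} = A ⊗ A^{⊗k}`. -/
def mpPow {n : ℕ} (A : Matrix (Fin n) (Fin n) (WithBot ℝ)) : ℕ → Matrix (Fin n) (Fin n) (WithBot ℝ)
  | 0 => mpId n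
  | k + 1 => mpMul A (mpPow A k)

/-- The max-plus trace: the maximum of the diagonal entries. -/
def mpTrace {n : ℕ} (M : Matrix (Fin n) (Fin n) (WithBot ℝ)) : WithBot ℝ :=
  Finset.univ.sup fun i => M i i

/-- A max-plus matrix is *irreducible* if no simultaneous row/column permutation puts it in
block upper-triangular form (with two nontrivial square diagonal blocks and an `ε`-block
below the diagonal). -/
def MPIrred {n : ℕ} (A : Matrix (Fin n) (Fin n) (WithBot ℝ)) : Prop :=
  ¬ ∃ (σ : Equiv.Perm (Fin n)) (k : ℕ), 0 < k ∧ k < n ∧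
      ∀ i j : Fin n, k ≤ (i : ℕ) → (j : ℕ) < k → A (σ i) (σ j) = ⊥

/-!
Write `x k = A^{⊗k} ⊗ r`, `d = p - q` and `F i = (d - i) λ + x (q + i)`. Max-plus linearity
of `A ⊗ ·` gives `A ⊗ v = ⊕_{i=1}^{d} F i`, while `λ ⊗ v = ⊕_{i=1}^{d} F (i - 1)`. The two
sums differ only in the terms `F d` and `F 0`, and these coincide because
`x (q + d) = c + x q = d λ + x q`.
-/

open Finset

namespace WithBot

variable {α ι : Type*} [LinearOrder α] [Add α]

lemma add_finset_sup [AddLeftMono α] (a : WithBot α) (s : Finset ι) (f : ι → WithBot α) :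
    a + s.sup f = s.sup fun i => a + f i :=
  apply_sup_eq_sup_comp (a + ·) (fun _ _ => (monotone_id.const_add a).map_sup _ _) (add_bot a)

lemma finset_sup_add [AddRightMono α] (s : Finset ι) (f : ι → WithBot α) (a : WithBot α) :
    s.sup f + a = s.sup fun i => f i + a :=
  apply_sup_eq_sup_comp (· + a) (fun _ _ => (monotone_id.add_const a).map_sup _ _) (bot_add a)

end WithBot

lemma Finset.sup_Icc_one_comp_pred {α : Type*} [SemilatticeSup α] [OrderBot α] {f : ℕ → α}
    {n : ℕ} (h : f n = f 0) : (Icc 1 n).sup (fun i => f (i - 1)) = (Icc 1 n).sup f := by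
  apply le_antisymm <;> refine Finset.sup_le fun i hi => ?_ <;> obtain ⟨hi1, hin⟩ := mem_Icc.mp hi
  · rcases hi1.eq_or_lt with rfl | hi1
    · rw [Nat.sub_self, ← h]
      exact le_sup (mem_Icc.mpr ⟨hin, le_rfl⟩)
    · exact le_sup_of_le (mem_Icc.mpr ⟨by omega, by omega⟩) le_rfl
  · rcases hin.eq_or_lt with rfl | hin
    · rw [h]
      exact le_sup_of_le (mem_Icc.mpr ⟨le_rfl, hi1⟩) le_rfl
    · exact le_sup_of_le (b := i + 1) (mem_Icc.mpr ⟨by omega, by omega⟩) le_rfl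

section MaxPlus

variable {n : ℕ} (A : Matrix (Fin n) (Fin n) (WithBot ℝ))

lemma mpMulVec_mpMul (B : Matrix (Fin n) (Fin n) (WithBot ℝ)) (r : Fin n → WithBot ℝ) :
    mpMulVec (mpMul A B) r = mpMulVec A (mpMulVec B r) := by
  funext i
  simp only [mpMulVec, mpMul, Matrix.of_apply, WithBot.finset_sup_add, WithBot.add_finset_sup]
  rw [Finset.sup_comm]
  simp only [add_assoc]

lemma mpMulVec_mpPow_succ (r : Fin n → WithBot ℝ) (k : ℕ) :
    mpMulVec (mpPow A (k + 1)) r = mpMulVec A (mpMulVec (mpPow A k) r) :=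
  mpMulVec_mpMul A (mpPow A k) r

lemma mpMulVec_finset_sup_add {ι : Type*} (s : Finset ι) (a : ι → WithBot ℝ)
    (w : ι → Fin n → WithBot ℝ) :
    mpMulVec A (fun j => s.sup fun i => a i + w i j) =
      fun k => s.sup fun i => a i + mpMulVec A (w i) k := by
  funext k
  simp only [mpMulVec, WithBot.add_finset_sup]
  rw [Finset.sup_comm]
  simp only [add_left_comm]

end MaxPlus

theorem stmt_11_general {n : ℕ} (A : Matrix (Fin n) (Fin n) (WithBot ℝ)) (r : Fin n → WithBot ℝ)
    (p q : ℕ) (hpq : q < p) (c : ℝ)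
    (hcyc : ∀ s, mpMulVec (mpPow A p) r s = ((c : ℝ) : WithBot ℝ) + mpMulVec (mpPow A q) r s)
    (lam : ℝ) (hlam : lam = c / ((p - q : ℕ) : ℝ))
    (v : Fin n → WithBot ℝ)
    (hv : ∀ s, v s = (Finset.Icc 1 (p - q)).sup
        fun i => ((((p - q - i : ℕ) : ℝ) * lam : ℝ) : WithBot ℝ)
          + mpMulVec (mpPow A (q + i - 1)) r s) :
    ∀ s, mpMulVec A v s = ((lam : ℝ) : WithBot ℝ) + v s := by
  intro s
  set d := p - q
  let F : ℕ → WithBot ℝ := fun i =>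
    ((((d - i : ℕ) : ℝ) * lam : ℝ) : WithBot ℝ) + mpMulVec (mpPow A (q + i)) r s
  have hperiod : F d = F 0 := by
    have hc : c = d * lam := by
      rw [hlam, mul_div_cancel₀]
      exact_mod_cast (Nat.sub_pos_of_lt hpq).ne'
    have hqd : q + d = p := Nat.add_sub_cancel' hpq.le
    simp only [F, Nat.sub_self, Nat.sub_zero, Nat.add_zero, hqd, hcyc s, hc, Nat.cast_zero,
      zero_mul, WithBot.coe_zero, zero_add]
  have hAv : mpMulVec A v s = (Icc 1 d).sup F := by
    rw [funext hv, mpMulVec_finset_sup_add]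
    refine sup_congr rfl fun i hi => ?_
    rw [← mpMulVec_mpPow_succ, Nat.sub_add_cancel (by grind)]
  have hlamv : ((lam : ℝ) : WithBot ℝ) + v s = (Icc 1 d).sup fun i => F (i - 1) := by
    rw [hv s, WithBot.add_finset_sup]
    refine sup_congr rfl fun i hi => ?_
    obtain ⟨hi1, hid⟩ := mem_Icc.mp hi
    have hcoeff : lam + ((d - i : ℕ) : ℝ) * lam = ((d - (i - 1) : ℕ) : ℝ) * lam := by
      rw [show d - (i - 1) = d - i + 1 by omega]
      push_cast
      ring
    rw [← add_assoc, ← WithBot.coe_add, hcoeff, Nat.add_sub_assoc hi1]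
  rw [hAv, hlamv, sup_Icc_one_comp_pred hperiod]

/-- **Correctness of the max-plus Power Method (Algorithm 2 of the paper).**  Suppose the
iterates of `r ≠ (ε,…,ε)` under `A` become periodic up to a scalar: `A^{⊗p} ⊗ r =
c ⊗ (A^{⊗q} ⊗ r)` with `p > q ≥ 0` and `c ≥ 0`.  Set `λ = c/(p−q)` and
`v = ⊕_{i=1}^{p−q} λ^{⊗(p−q−i)} ⊗ A^{⊗(q+i−1)} ⊗ r`.  If `v ≠ (ε,…,ε)`, then `λ` is an
eigenvalue of `A` with eigenvector `v`: `A ⊗ v = λ ⊗ v`. -/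
theorem stmt_11 {n : ℕ} (A : Matrix (Fin n) (Fin n) (WithBot ℝ)) (r : Fin n → WithBot ℝ)
    (hr : ¬ ∀ s, r s = ⊥) (p q : ℕ) (hpq : q < p) (c : ℝ) (hc : 0 ≤ c)
    (hcyc : ∀ s, mpMulVec (mpPow A p) r s = ((c : ℝ) : WithBot ℝ) + mpMulVec (mpPow A q) r s)
    (lam : ℝ) (hlam : lam = c / ((p - q : ℕ) : ℝ))
    (v : Fin n → WithBot ℝ)
    (hv : ∀ s, v s = (Finset.Icc 1 (p - q)).sup
        fun i => ((((p - q - i : ℕ) : ℝ) * lam : ℝ) : WithBot ℝ)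
          + mpMulVec (mpPow A (q + i - 1)) r s)
    (hvne : ¬ ∀ s, v s = ⊥) :
    ∀ s, mpMulVec A v s = ((lam : ℝ) : WithBot ℝ) + v s :=
  stmt_11_general A r p q hpq c hcyc lam hlam v hv
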